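/- Let f : Finset α → ℝ. Let D be a finite subset of α, let y₁ ≠ y₂ be two elements not in D, and let F₁ and F₂ be finite subsets of α disjoint from D and not containing y₁ or y₂. Suppose that f(H ∪ {y₁}) = f(H ∪ F₁) and f(H ∪ {y₂}) = f(H ∪ F₂) for every H ⊆ D. Then C_f(D ∪ {y₁}) − C_f(D ∪ {y₂}) = Σ_{D ⊆ H ⊆ D ∪ F₁} C_f(H) − Σ_{D ⊆ H ⊆ D ∪ F₂} C_f(H), where C_f(S) = Σ_{K ⊆ S} (−1)^{|S| − |K|} f(K). -/

import Mathlib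

/-!
Splitting the subsets of `insert y S` according to whether they contain `y` gives
`C_f(S ∪ {y}) = C_{f(· ∪ {y})}(S) − C_f(S)`. Iterating this over the elements of `F`, the sum of
`C_f` over the interval `[D, D ∪ F]` telescopes to `C_{f(· ∪ F)}(D)`. The hypothesis
`f(H ∪ {y}) = f(H ∪ F)` on subsets of `D` identifies `C_{f(· ∪ {y})}(D)` with `C_{f(· ∪ F)}(D)`, so
`C_f(D ∪ {y}) = Σ_{D ⊆ H ⊆ D ∪ F} C_f(H) − C_f(D)` for each of `y₁, y₂`, and `C_f(D)` cancels in the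
difference.
-/

/-- The alternating-sum transform `C_f(S) = Σ_{K ⊆ S} (−1)^(|S| − |K|) f(K)`. -/
noncomputable def Cf {α : Type*} (f : Finset α → ℝ) (S : Finset α) : ℝ :=
  ∑ K ∈ S.powerset, (-1 : ℝ) ^ (S.card - K.card) * f K

open Finset

lemma Cf_congr {α : Type*} {f g : Finset α → ℝ} {S : Finset α} (h : ∀ K ⊆ S, f K = g K) :
    Cf f S = Cf g S :=
  sum_congr rfl fun K hK => by rw [h K (mem_powerset.1 hK)]

lemma Cf_insert {α : Type*} [DecidableEq α] (f : Finset α → ℝ) {S : Finset α} {a : α}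
    (ha : a ∉ S) :
    Cf f (insert a S) = Cf (fun K => f (insert a K)) S - Cf f S := by
  rw [Cf, sum_powerset_insert ha, Cf, Cf, sub_eq_add_neg, add_comm, ← sum_neg_distrib]
  congr 1
  · refine sum_congr rfl fun K hK => ?_
    have haK : a ∉ K := fun h => ha (mem_powerset.1 hK h)
    rw [card_insert_of_notMem ha, card_insert_of_notMem haK, Nat.add_sub_add_right]
  · refine sum_congr rfl fun K hK => ?_
    have hK := card_le_card (mem_powerset.1 hK)
    rw [card_insert_of_notMem ha, Nat.sub_add_comm hK, pow_succ]
    ring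

lemma sum_powerset_Cf_union {α : Type*} [DecidableEq α] (f : Finset α → ℝ) {D F : Finset α}
    (h : Disjoint D F) :
    ∑ G ∈ F.powerset, Cf f (D ∪ G) = Cf (fun K => f (K ∪ F)) D := by
  induction F using Finset.induction generalizing f with
  | empty => simp
  | @insert a F haF ih =>
    have haD : a ∉ D := disjoint_right.1 h (mem_insert_self a F)
    have hCf : ∀ G ∈ F.powerset, Cf f (D ∪ insert a G)
        = Cf (fun K => f (insert a K)) (D ∪ G) - Cf f (D ∪ G) := fun G hG => by
      rw [union_insert, Cf_insert]
      exact notMem_union.2 ⟨haD, fun haG => haF (mem_powerset.1 hG haG)⟩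
    rw [sum_powerset_insert haF, sum_congr rfl hCf, sum_sub_distrib, add_sub_cancel,
      ih _ (h.mono_right (subset_insert a F))]
    simp only [union_insert]

lemma sum_filter_superset_powerset_union {α β : Type*} [DecidableEq α] [AddCommMonoid β]
    (g : Finset α → β) {D F : Finset α} (h : Disjoint D F) :
    ∑ H ∈ (D ∪ F).powerset.filter (fun H => D ⊆ H), g H = ∑ G ∈ F.powerset, g (D ∪ G) := by
  rw [← Icc_eq_filter_powerset, Icc_eq_image_powerset subset_union_left,
    union_sdiff_cancel_left h, sum_image]
  intro G hG G' hG' hGG'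
  rw [← union_sdiff_cancel_left (h.mono_right (mem_powerset.1 hG)),
    ← union_sdiff_cancel_left (h.mono_right (mem_powerset.1 hG'))]
  exact congrArg (· \ D) hGG'

lemma Cf_insert_eq_sum_filter_superset_sub {α : Type*} [DecidableEq α] (f : Finset α → ℝ)
    {D F : Finset α} {y : α} (hy : y ∉ D) (hF : Disjoint D F)
    (hf : ∀ H ⊆ D, f (insert y H) = f (H ∪ F)) :
    Cf f (insert y D)
      = (∑ H ∈ (D ∪ F).powerset.filter (fun H => D ⊆ H), Cf f H) - Cf f D := by
  rw [sum_filter_superset_powerset_union _ hF, sum_powerset_Cf_union f hF, Cf_insert f hy,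
    Cf_congr hf]

theorem Cf_four_term_core_general {α : Type*} [DecidableEq α] (f : Finset α → ℝ)
    (D : Finset α) (y₁ y₂ : α) (hy₁ : y₁ ∉ D) (hy₂ : y₂ ∉ D)
    (F₁ F₂ : Finset α) (hF₁ : Disjoint D F₁) (hF₂ : Disjoint D F₂)
    (hf₁ : ∀ H ⊆ D, f (insert y₁ H) = f (H ∪ F₁))
    (hf₂ : ∀ H ⊆ D, f (insert y₂ H) = f (H ∪ F₂)) :
    Cf f (insert y₁ D) - Cf f (insert y₂ D)
      = (∑ H ∈ (D ∪ F₁).powerset.filter (fun H => D ⊆ H), Cf f H)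
        - ∑ H ∈ (D ∪ F₂).powerset.filter (fun H => D ⊆ H), Cf f H := by
  rw [Cf_insert_eq_sum_filter_superset_sub f hy₁ hF₁ hf₁,
    Cf_insert_eq_sum_filter_superset_sub f hy₂ hF₂ hf₂]
  ring

/-- Core identity of the four-term relation: if `f(H ∪ {yᵢ}) = f(H ∪ Fᵢ)` for
all `H ⊆ D`, then
`C_f(D ∪ {y₁}) − C_f(D ∪ {y₂}) = Σ_{D ⊆ H ⊆ D ∪ F₁} C_f(H) − Σ_{D ⊆ H ⊆ D ∪ F₂} C_f(H)`. -/
theorem Cf_four_term_core {α : Type*} [DecidableEq α] (f : Finset α → ℝ)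
    (D : Finset α) (y₁ y₂ : α) (hy : y₁ ≠ y₂) (hy₁ : y₁ ∉ D) (hy₂ : y₂ ∉ D)
    (F₁ F₂ : Finset α) (hF₁ : Disjoint D F₁) (hF₂ : Disjoint D F₂)
    (hy₁F₁ : y₁ ∉ F₁) (hy₂F₁ : y₂ ∉ F₁) (hy₁F₂ : y₁ ∉ F₂) (hy₂F₂ : y₂ ∉ F₂)
    (hf₁ : ∀ H ⊆ D, f (insert y₁ H) = f (H ∪ F₁))
    (hf₂ : ∀ H ⊆ D, f (insert y₂ H) = f (H ∪ F₂)) :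
    Cf f (insert y₁ D) - Cf f (insert y₂ D)
      = (∑ H ∈ (D ∪ F₁).powerset.filter (fun H => D ⊆ H), Cf f H)
        - ∑ H ∈ (D ∪ F₂).powerset.filter (fun H => D ⊆ H), Cf f H :=
  Cf_four_term_core_general f D y₁ y₂ hy₁ hy₂ F₁ F₂ hF₁ hF₂ hf₁ hf₂
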